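/- Let D = {(τ,ϑ) ∈ ℝ² : 1 < cosh τ < √2}, and define x : D → ℝ³ by x(τ,ϑ) = (F(τ), cosh τ · cosh ϑ, cosh τ · sinh ϑ) where F(τ) = ∫₀^τ √(2 − cosh² t) dt. Then for all (τ,ϑ) ∈ D the partial derivatives satisfy ⟨∂_τ x, ∂_τ x⟩₁ = 1, ⟨∂_τ x, ∂_ϑ x⟩₁ = 0, and ⟨∂_ϑ x, ∂_ϑ x⟩₁ = −cosh² τ. Thus x is an isometric immersion into 𝕃³ of the constant curvature K = −1 metric ds² = dτ² − cosh²τ dϑ². -/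

import Mathlib

/-!
In hyperbolic polar coordinates `(x₂, x₃) = (r cosh ϑ, r sinh ϑ)` the Minkowski form reads
`dx₁² + dr² − r² dϑ²`, because `cosh² − sinh² = 1`. Here `r = cosh τ`, so `∂_τ x ⟂ ∂_ϑ x`,
`⟨∂_ϑ x, ∂_ϑ x⟩₁ = −cosh² τ` and `⟨∂_τ x, ∂_τ x⟩₁ = (2 − cosh² τ) + sinh² τ = 1`: the first
component of `x` is chosen to make this sum `1`, which is possible as long as `cosh² τ ≤ 2`.
-/

/-- The Minkowski bilinear form of index 1 on `ℝ³`: `⟨x,y⟩₁ = x₁y₁ + x₂y₂ − x₃y₃`. -/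
def minkowskiForm (x y : ℝ × ℝ × ℝ) : ℝ :=
  x.1 * y.1 + x.2.1 * y.2.1 - x.2.2 * y.2.2

/-- The parametrization `x(τ,ϑ) = (∫₀^τ √(2 − cosh²t) dt, cosh τ cosh ϑ, cosh τ sinh ϑ)`. -/
noncomputable def xKnegL3time : ℝ × ℝ → ℝ × ℝ × ℝ := fun p =>
  (∫ t in (0 : ℝ)..p.1, Real.sqrt (2 - Real.cosh t ^ 2),
    Real.cosh p.1 * Real.cosh p.2, Real.cosh p.1 * Real.sinh p.2)

open Real

section HyperbolicPolar

variable (a b r s ϑ : ℝ)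

lemma minkowskiForm_cosh_sinh :
    minkowskiForm (a, r * cosh ϑ, r * sinh ϑ) (b, s * cosh ϑ, s * sinh ϑ) = a * b + r * s := by
  simp only [minkowskiForm]
  linear_combination r * s * cosh_sq_sub_sinh_sq ϑ

lemma minkowskiForm_cosh_sinh_sinh_cosh :
    minkowskiForm (a, r * cosh ϑ, r * sinh ϑ) (b, s * sinh ϑ, s * cosh ϑ) = a * b := by
  simp only [minkowskiForm]
  ring

lemma minkowskiForm_sinh_cosh :
    minkowskiForm (a, r * sinh ϑ, r * cosh ϑ) (b, s * sinh ϑ, s * cosh ϑ) = a * b - r * s := by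
  simp only [minkowskiForm]
  linear_combination -r * s * cosh_sq_sub_sinh_sq ϑ

end HyperbolicPolar

section Derivatives

variable (τ ϑ : ℝ)

lemma hasDerivAt_xKnegL3time_fst :
    HasDerivAt (fun t => xKnegL3time (t, ϑ))
      (√(2 - cosh τ ^ 2), sinh τ * cosh ϑ, sinh τ * sinh ϑ) τ := by
  have hcont : Continuous fun t => √(2 - cosh t ^ 2) := by fun_prop
  exact (hcont.integral_hasStrictDerivAt 0 τ).hasDerivAt.prodMk
    (((hasDerivAt_cosh τ).mul_const (cosh ϑ)).prodMk ((hasDerivAt_cosh τ).mul_const (sinh ϑ)))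

lemma hasDerivAt_xKnegL3time_snd :
    HasDerivAt (fun t => xKnegL3time (τ, t)) (0, cosh τ * sinh ϑ, cosh τ * cosh ϑ) ϑ :=
  (hasDerivAt_const ϑ (xKnegL3time (τ, ϑ)).1).prodMk
    (((hasDerivAt_cosh ϑ).const_mul (cosh τ)).prodMk ((hasDerivAt_sinh ϑ).const_mul (cosh τ)))

end Derivatives

theorem Kneg_immersion_L3_timelike_general (τ ϑ : ℝ)
    (hτ₂ : Real.cosh τ < Real.sqrt 2) :
    minkowskiForm (deriv (fun t => xKnegL3time (t, ϑ)) τ)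
        (deriv (fun t => xKnegL3time (t, ϑ)) τ) = 1 ∧
    minkowskiForm (deriv (fun t => xKnegL3time (t, ϑ)) τ)
        (deriv (fun t => xKnegL3time (τ, t)) ϑ) = 0 ∧
    minkowskiForm (deriv (fun t => xKnegL3time (τ, t)) ϑ)
        (deriv (fun t => xKnegL3time (τ, t)) ϑ) = -Real.cosh τ ^ 2 := by
  have hcosh_sq : cosh τ ^ 2 < 2 := (lt_sqrt (cosh_pos τ).le).mp hτ₂
  rw [(hasDerivAt_xKnegL3time_fst τ ϑ).deriv, (hasDerivAt_xKnegL3time_snd τ ϑ).deriv,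
    minkowskiForm_cosh_sinh, minkowskiForm_cosh_sinh_sinh_cosh, minkowskiForm_sinh_cosh,
    mul_self_sqrt (by linarith)]
  refine ⟨?_, by ring, by ring⟩
  linear_combination -cosh_sq_sub_sinh_sq τ

/-- On `D = {(τ,ϑ) : 1 < cosh τ < √2}` the map `xKnegL3time` is an isometric
immersion into `𝕃³` of the metric `ds² = dτ² − cosh²τ dϑ²` (K = −1). -/
theorem Kneg_immersion_L3_timelike (τ ϑ : ℝ)
    (hτ₁ : 1 < Real.cosh τ) (hτ₂ : Real.cosh τ < Real.sqrt 2) :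
    minkowskiForm (deriv (fun t => xKnegL3time (t, ϑ)) τ)
        (deriv (fun t => xKnegL3time (t, ϑ)) τ) = 1 ∧
    minkowskiForm (deriv (fun t => xKnegL3time (t, ϑ)) τ)
        (deriv (fun t => xKnegL3time (τ, t)) ϑ) = 0 ∧
    minkowskiForm (deriv (fun t => xKnegL3time (τ, t)) ϑ)
        (deriv (fun t => xKnegL3time (τ, t)) ϑ) = -Real.cosh τ ^ 2 :=
  Kneg_immersion_L3_timelike_general τ ϑ hτ₂
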